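/- arXiv:2506.04154 — 6 statements merged into one kernel-verified Lean document; each statement's English description precedes it below -/
import Mathlib

section
/- If (X,d) is a separable metric space, then every sequence (x_n) in X admits a subsequence (w_i) such that the sequence of internal functionals (h_{w_i}) converges pointwise on X to some metric functional. -/
open Filter Topology

variable {X : Type*} [MetricSpace X]

/-- The internal metric functional based at `o` associated with `w`. -/
def internalFunctional (o w : X) : X → ℝ := fun x => dist x w - dist o w

/-- A metric functional based at `o` is an element of the pointwise closure of the internals. -/
def IsMetricFunctional (o : X) (h : X → ℝ) : Prop :=
  h ∈ closure (Set.range (internalFunctional o))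

/-- `d`-weak convergence of a sequence to `z`, tested against all metric functionals. -/
def DWeakConv (o : X) (x : ℕ → X) (z : X) : Prop :=
  ∀ h : X → ℝ, IsMetricFunctional o h → h z ≤ atTop.liminf fun n => h (x n)

lemma internal_lip (o w p q : X) :
    |internalFunctional o w p - internalFunctional o w q| ≤ dist p q := by
  simp only [internalFunctional]
  have : dist p w - dist o w - (dist q w - dist o w) = dist p w - dist q w := by ring
  rw [this]
  exact abs_dist_sub_le p q w

theorem separable_subseq_internal_converges [TopologicalSpace.SeparableSpace X]
    (o : X) (x : ℕ → X) :
    ∃ φ : ℕ → ℕ, StrictMono φ ∧ ∃ h : X → ℝ, IsMetricFunctional o h ∧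
      ∀ p : X, Tendsto (fun i => internalFunctional o (x (φ i)) p) atTop (𝓝 (h p)) := by
  have : Nonempty X := ⟨o⟩
  set D : ℕ → X := TopologicalSpace.denseSeq X with hD
  have hDd : DenseRange D := TopologicalSpace.denseRange_denseSeq X
  -- the values on the dense sequence live in a compact product
  set s : Set (ℕ → ℝ) := Set.univ.pi (fun k => Set.Icc (-(dist (D k) o)) (dist (D k) o))
    with hs
  have hscomp : IsCompact s := isCompact_univ_pi fun k => isCompact_Icc
  set g : ℕ → ℕ → ℝ := fun n k => internalFunctional o (x n) (D k) with hg
  have hgs : ∀ n, g n ∈ s := by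
    intro n k _
    have := abs_dist_sub_le (D k) o (x n)
    rw [abs_sub_le_iff] at this
    simp only [g, internalFunctional, Set.mem_Icc]
    constructor <;> linarith [this.1, this.2]
  obtain ⟨L, _, φ, hφ, hL⟩ := hscomp.tendsto_subseq hgs
  refine ⟨φ, hφ, ?_⟩
  have hLk : ∀ k, Tendsto (fun i => internalFunctional o (x (φ i)) (D k)) atTop (𝓝 (L k)) := by
    intro k
    exact (tendsto_pi_nhds.1 hL) k
  -- every point: Cauchy
  have hca : ∀ p : X, CauchySeq (fun i => internalFunctional o (x (φ i)) p) := by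
    intro p
    rw [Metric.cauchySeq_iff]
    intro ε hε
    obtain ⟨k, hk⟩ := hDd.exists_dist_lt p (by linarith : (0:ℝ) < ε/4)
    have hbc : CauchySeq (fun i => internalFunctional o (x (φ i)) (D k)) := (hLk k).cauchySeq
    rw [Metric.cauchySeq_iff] at hbc
    obtain ⟨N, hN⟩ := hbc (ε/4) (by linarith)
    refine ⟨N, fun m hm n hn => ?_⟩
    have h1 := internal_lip o (x (φ m)) p (D k)
    have h2 := internal_lip o (x (φ n)) p (D k)
    have h3 := hN m hm n hn
    rw [Real.dist_eq] at h3 ⊢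
    have : |internalFunctional o (x (φ m)) p - internalFunctional o (x (φ n)) p| ≤
        |internalFunctional o (x (φ m)) p - internalFunctional o (x (φ m)) (D k)|
        + |internalFunctional o (x (φ m)) (D k) - internalFunctional o (x (φ n)) (D k)|
        + |internalFunctional o (x (φ n)) (D k) - internalFunctional o (x (φ n)) p| := by
      have := abs_sub_le (internalFunctional o (x (φ m)) p)
        (internalFunctional o (x (φ m)) (D k)) (internalFunctional o (x (φ n)) p)
      have := abs_sub_le (internalFunctional o (x (φ m)) (D k))
        (internalFunctional o (x (φ n)) (D k)) (internalFunctional o (x (φ n)) p)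
      linarith
    have h4 : |internalFunctional o (x (φ n)) (D k) - internalFunctional o (x (φ n)) p|
        ≤ dist p (D k) := by rw [abs_sub_comm]; exact h2
    linarith [dist_comm p (D k)]
  set h : X → ℝ := fun p => limUnder atTop (fun i => internalFunctional o (x (φ i)) p)
    with hh
  have htend : ∀ p, Tendsto (fun i => internalFunctional o (x (φ i)) p) atTop (𝓝 (h p)) :=
    fun p => (hca p).tendsto_limUnder
  refine ⟨h, ?_, htend⟩
  have : Tendsto (fun i => internalFunctional o (x (φ i))) atTop (𝓝 h) :=
    tendsto_pi_nhds.2 htend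
  exact mem_closure_of_tendsto this (Eventually.of_forall fun i => Set.mem_range_self _)
end

section
/- For every point w in a metric space (X,d) with basepoint o, the distance d(o,w) equals the maximum over all metric functionals h of h(w). -/
open Filter Topology

variable {X : Type*} [MetricSpace X]

theorem dist_eq_max_metricFunctional (o w : X) :
    IsGreatest {r : ℝ | ∃ h : X → ℝ, IsMetricFunctional o h ∧ r = h w} (dist o w) := by
  constructor
  · refine ⟨internalFunctional o o, subset_closure ⟨o, rfl⟩, ?_⟩
    simp [internalFunctional, dist_comm]
  · rintro r ⟨h, hmem, rfl⟩
    have hclosed : IsClosed {f : X → ℝ | f w ≤ dist o w} :=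
      isClosed_le (continuous_apply w) continuous_const
    have hsub : Set.range (internalFunctional o) ⊆ {f : X → ℝ | f w ≤ dist o w} := by
      rintro _ ⟨v, rfl⟩
      simp only [internalFunctional, Set.mem_setOf_eq]
      have := dist_triangle w o v
      linarith [dist_comm w o ▸ this]
    exact closure_minimal hsub hclosed hmem
end

section
/- For a unit vector u in a normed linear space X, the Busemann functional satisfies h^u(x) = max_{f ∈ ∂‖u‖} ⟨-x, f⟩ for all x, where ∂‖u‖ = {f ∈ X* : f(u) = 1, ‖f‖ = 1} is the set of norm-one support functionals at u. -/
/-! The map `p y = busemann u (-y)` is sublinear, and `p ≤ ‖·‖`, `p u ≤ 1`, `p (-u) ≤ -1`. Hence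
every linear functional below `p` is a norm-one support functional at `u`; conversely every support
functional `f` satisfies `f (-x) ≤ ‖x - t • u‖ - t` for all `t ≥ 0`, i.e. `f ≤ p`. Hahn–Banach
gives a linear functional below `p` that agrees with `p` at `-x`. -/

open Filter Topology

variable {X : Type*} [NormedAddCommGroup X] [NormedSpace ℝ X]

/-- The Busemann functional associated with a unit vector `u`,
given by `inf_{t ≥ 0} (‖x - t•u‖ - t)`, which equals `lim_{t→∞} (‖x - t•u‖ - t)`. -/
noncomputable def busemann (u : X) (x : X) : ℝ :=
  sInf ((fun t : ℝ => ‖x - t • u‖ - t) '' Set.Ici (0:ℝ))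

theorem exists_linearMap_eq_le_sublinear {E : Type*} [AddCommGroup E] [Module ℝ E] (N : E → ℝ)
    (N_hom : ∀ c : ℝ, 0 < c → ∀ x, N (c • x) = c * N x) (N_add : ∀ x y, N (x + y) ≤ N x + N y)
    (x : E) : ∃ g : E →ₗ[ℝ] ℝ, g x = N x ∧ ∀ y, g y ≤ N y := by
  have N_zero : N 0 = 0 := by
    have := N_hom 2 two_pos 0
    rw [smul_zero] at this
    linarith
  have N_ray : ∀ c : ℝ, c * N x ≤ N (c • x) := by
    intro c
    rcases lt_trichotomy c 0 with hc | rfl | hc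
    · have := N_add (c • x) ((-c) • x)
      rw [← add_smul, add_neg_cancel, zero_smul, N_zero, N_hom (-c) (neg_pos.2 hc)] at this
      linarith
    · simp [N_zero]
    · exact (N_hom c hc x).ge
  let f : E →ₗ.[ℝ] ℝ := LinearPMap.mkSpanSingleton' x (N x) fun (c : ℝ) hc => by
    rcases smul_eq_zero.1 hc with rfl | rfl <;> simp [N_zero]
  obtain ⟨g, hgf, hgN⟩ := exists_extension_of_le_sublinear f N N_hom N_add <| by
    rintro ⟨_, hz⟩
    obtain ⟨c, rfl⟩ := Submodule.mem_span_singleton.1 hz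
    rw [LinearPMap.mkSpanSingleton'_apply]
    simpa using N_ray c
  exact ⟨g, (hgf ⟨x, Submodule.mem_span_singleton_self x⟩).trans
    (LinearPMap.mkSpanSingleton'_apply_self _ _ _ _), hgN⟩

section Busemann

variable {u : X}

theorem busemann_le (hu : 1 ≤ ‖u‖) {x : X} {t : ℝ} (ht : 0 ≤ t) :
    busemann u x ≤ ‖x - t • u‖ - t := by
  refine csInf_le ⟨-‖x‖, ?_⟩ ⟨t, ht, rfl⟩
  rintro _ ⟨s, hs, rfl⟩
  have := norm_sub_norm_le (s • u) x
  rw [norm_smul, Real.norm_of_nonneg hs, norm_sub_rev] at this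
  dsimp only
  nlinarith [Set.mem_Ici.1 hs]

theorem le_busemann {x : X} {c : ℝ} (h : ∀ t, 0 ≤ t → c ≤ ‖x - t • u‖ - t) :
    c ≤ busemann u x :=
  le_csInf (Set.nonempty_Ici.image _) (Set.forall_mem_image.2 h)

theorem busemann_le_norm (hu : 1 ≤ ‖u‖) (x : X) : busemann u x ≤ ‖x‖ := by
  simpa using busemann_le hu (x := x) le_rfl

theorem busemann_self_le (hu : 1 ≤ ‖u‖) : busemann u u ≤ -1 := by
  simpa using busemann_le hu (x := u) zero_le_one

theorem busemann_smul_le (hu : 1 ≤ ‖u‖) {c : ℝ} (hc : 0 < c) (x : X) :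
    busemann u (c • x) ≤ c * busemann u x := by
  rw [← div_le_iff₀' hc]
  refine le_busemann fun t ht => (div_le_iff₀' hc).2 ?_
  calc busemann u (c • x) ≤ ‖c • x - (c * t) • u‖ - c * t := busemann_le hu (by positivity)
    _ = c * (‖x - t • u‖ - t) := by
      rw [mul_smul, ← smul_sub, norm_smul, Real.norm_of_nonneg hc.le, mul_sub]

theorem busemann_smul (hu : 1 ≤ ‖u‖) {c : ℝ} (hc : 0 < c) (x : X) :
    busemann u (c • x) = c * busemann u x := by
  refine le_antisymm (busemann_smul_le hu hc x) ?_
  have := busemann_smul_le hu (inv_pos.2 hc) (c • x)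
  rwa [inv_smul_smul₀ hc.ne', le_inv_mul_iff₀ hc] at this

theorem busemann_add_le (hu : 1 ≤ ‖u‖) (x y : X) :
    busemann u (x + y) ≤ busemann u x + busemann u y := by
  have split : ∀ s t, 0 ≤ s → 0 ≤ t →
      busemann u (x + y) ≤ (‖x - s • u‖ - s) + (‖y - t • u‖ - t) := by
    intro s t hs ht
    calc busemann u (x + y) ≤ ‖x + y - (s + t) • u‖ - (s + t) := busemann_le hu (add_nonneg hs ht)
      _ = ‖(x - s • u) + (y - t • u)‖ - (s + t) := by rw [add_smul, add_sub_add_comm]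
      _ ≤ _ := by linarith [norm_add_le (x - s • u) (y - t • u)]
  have hy : ∀ s, 0 ≤ s → busemann u (x + y) - (‖x - s • u‖ - s) ≤ busemann u y :=
    fun s hs => le_busemann fun t ht => by linarith [split s t hs ht]
  have hx : busemann u (x + y) - busemann u y ≤ busemann u x :=
    le_busemann fun s hs => by linarith [hy s hs]
  linarith

theorem apply_neg_le_busemann {f : X →L[ℝ] ℝ} (hfu : f u = 1) (hf : ‖f‖ ≤ 1) (x : X) :
    f (-x) ≤ busemann u x := by
  refine le_busemann fun t _ => ?_
  have hbound : f (t • u - x) ≤ ‖x - t • u‖ := by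
    calc f (t • u - x) ≤ ‖f (t • u - x)‖ := Real.le_norm_self _
      _ ≤ 1 * ‖t • u - x‖ := f.le_of_opNorm_le hf _
      _ = ‖x - t • u‖ := by rw [one_mul, norm_sub_rev]
  have hsplit : f (t • u - x) = t + f (-x) := by
    rw [sub_eq_add_neg, map_add, map_smul, hfu, smul_eq_mul, mul_one]
  linarith

end Busemann

theorem busemann_eq_max_support (u : X) (hu : ‖u‖ = 1) (x : X) :
    IsGreatest {r : ℝ | ∃ f : X →L[ℝ] ℝ, f u = 1 ∧ ‖f‖ = 1 ∧ r = f (-x)}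
      (busemann u x) := by
  refine ⟨?_, fun r ⟨f, hfu, hfn, hr⟩ => hr ▸ apply_neg_le_busemann hfu hfn.le x⟩
  obtain ⟨g, hgx, hg⟩ := exists_linearMap_eq_le_sublinear (fun y => busemann u (-y))
    (fun c hc y => by rw [← smul_neg, busemann_smul hu.ge hc])
    (fun y z => by rw [neg_add]; exact busemann_add_le hu.ge (-y) (-z)) (-x)
  have hg_norm : ∀ y, g y ≤ normSeminorm ℝ X y := fun y =>
    (hg y).trans (by simpa using busemann_le_norm hu.ge (-y))
  let F : X →L[ℝ] ℝ := g.mkContinuous 1 fun y => by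
    rw [Real.norm_eq_abs, one_mul]
    exact (normSeminorm ℝ X).abs_le_of_le hg_norm y
  have hFg : ∀ y, F y = g y := g.mkContinuous_apply _ _
  have hFu : F u = 1 := by
    rw [hFg]
    have h_le : g u ≤ 1 := by simpa [hu] using hg_norm u
    have h_ge : g (-u) ≤ busemann u u := by simpa only [neg_neg] using hg (-u)
    rw [map_neg] at h_ge
    exact le_antisymm h_le (by linarith [busemann_self_le hu.ge])
  have hFx : F (-x) = busemann u x := by rw [hFg, hgx, neg_neg]
  refine ⟨F, hFu, le_antisymm (g.mkContinuous_norm_le zero_le_one _) ?_, hFx.symm⟩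
  have := F.le_opNorm u
  rwa [hFu, hu, norm_one, mul_one] at this
end

section
/- In a proper metric space (all closed balls compact), if a bounded sequence (x_n) converges d-weakly to z, then it converges strongly to z. -/
open Filter Topology

variable {X : Type*} [MetricSpace X]

lemma dweak_key (o : X) (x : ℕ → X) (hb : Bornology.IsBounded (Set.range x)) (z : X)
    (hz : DWeakConv o x z) (w : X) :
    dist z w ≤ atTop.liminf fun n => dist (x n) w := by
  have h := hz (internalFunctional o w) (subset_closure ⟨w, rfl⟩)
  simp only [internalFunctional] at h
  have hbdd : IsBoundedUnder (· ≥ ·) (atTop : Filter ℕ) (fun n => dist (x n) w) :=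
    ⟨0, Filter.eventually_map.2 (Filter.Eventually.of_forall fun n => dist_nonneg)⟩
  obtain ⟨r, hr⟩ := hb.subset_closedBall w
  have hcob : IsCoboundedUnder (· ≥ ·) (atTop : Filter ℕ) (fun n => dist (x n) w) :=
    isCoboundedUnder_ge_of_eventually_le atTop
      (Filter.Eventually.of_forall fun n => Metric.mem_closedBall.mp (hr (Set.mem_range_self n)))
  rw [liminf_sub_const atTop (fun n => dist (x n) w) (dist o w) hcob hbdd] at h
  linarith

theorem proper_bounded_dweak_imp_strong [ProperSpace X] (o : X) (x : ℕ → X)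
    (hb : Bornology.IsBounded (Set.range x)) (z : X)
    (hz : DWeakConv o x z) :
    Tendsto (fun n => dist (x n) z) atTop (𝓝 0) := by
  rw [← tendsto_iff_dist_tendsto_zero]
  apply tendsto_of_subseq_tendsto
  intro ns hns
  obtain ⟨y, -, φ, hφ, hy⟩ :=
    tendsto_subseq_of_bounded hb (fun k => Set.mem_range_self (ns k) : ∀ k, x (ns k) ∈ Set.range x)
  have hyz : y = z := by
    have h1 : (atTop.liminf fun n => dist (x n) y) ≤ 0 := by
      refine le_of_forall_pos_le_add fun ε hε => ?_
      have hdy : Tendsto (fun k => dist (x (ns (φ k))) y) atTop (𝓝 0) :=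
        tendsto_iff_dist_tendsto_zero.mp hy
      have hev : ∀ᶠ k in atTop, dist (x (ns (φ k))) y ≤ ε := by
        filter_upwards [hdy.eventually (gt_mem_nhds hε)] with k hk using hk.le
      have hfreq : ∃ᶠ n in atTop, dist (x n) y ≤ ε :=
        (hns.comp hφ.tendsto_atTop).frequently hev.frequently
      have := Filter.liminf_le_of_frequently_le hfreq
        ⟨0, Filter.eventually_map.2 (Filter.Eventually.of_forall fun n => dist_nonneg)⟩
      linarith
    have h2 := dweak_key o x hb z hz y
    have : dist z y ≤ 0 := h2.trans h1
    exact (dist_le_zero.mp this).symm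
  exact ⟨φ, hyz ▸ hy⟩
end

section
/- In a uniformly convex normed space E, if a sequence (x_n) in the closed unit ball satisfies ‖x_n‖ → ‖x̂‖ and liminf_{n→∞} (‖x_n - w‖ - ‖w‖) ≥ ‖x̂ - w‖ - ‖w‖ for every w in the closed unit ball, then ‖x_n - x̂‖ → 0. -/
/-!
Testing `w = -x̂` in the hypothesis gives `liminf ‖xₙ + x̂‖ ≥ 2‖x̂‖`, while `‖xₙ + x̂‖ ≤ ‖xₙ‖ + ‖x̂‖`
tends to `2‖x̂‖`; so `‖xₙ + x̂‖ → 2‖x̂‖`. Rescaling `xₙ` onto the sphere of radius `‖x̂‖` moves it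
by `|‖xₙ‖ - ‖x̂‖| → 0`, after which uniform convexity turns `‖xₙ + x̂‖ → 2‖x̂‖` into
`‖xₙ - x̂‖ → 0`.
-/

open Filter Topology

variable {E : Type*} [NormedAddCommGroup E] [NormedSpace ℝ E]

theorem UniformConvexSpace.of_forall_closedBall {F : Type*} [SeminormedAddCommGroup F]
    (huc : ∀ ε > (0:ℝ), ∃ δ > (0:ℝ), ∀ x y : F, ‖x‖ ≤ 1 → ‖y‖ ≤ 1 →
      ε < ‖x - y‖ → ‖x + y‖ / 2 ≤ 1 - δ) :
    UniformConvexSpace F where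
  uniform_convex ε hε := by
    obtain ⟨δ, hδ, h⟩ := huc (ε / 2) (half_pos hε)
    refine ⟨2 * δ, by positivity, fun x hx y hy hxy => ?_⟩
    have := h x y hx.le hy.le (by linarith)
    linarith

theorem tendsto_of_le_liminf_of_le_of_tendsto {α ι : Type*}
    [ConditionallyCompleteLinearOrder α] [TopologicalSpace α] [OrderTopology α]
    {l : Filter ι} {f g : ι → α} {c : α} (hc : c ≤ liminf f l)
    (hf : IsBoundedUnder (· ≥ ·) l f) (hfg : ∀ᶠ i in l, f i ≤ g i)
    (hg : Tendsto g l (𝓝 c)) : Tendsto f l (𝓝 c) := by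
  refine tendsto_order.2 ⟨fun a ha => eventually_lt_of_lt_liminf (ha.trans_le hc) hf,
    fun b hb => ?_⟩
  filter_upwards [hfg, (tendsto_order.1 hg).2 b hb] with i hfi hgi
  exact hfi.trans_lt hgi

theorem norm_sub_smul_inv_norm_le (u : E) (r : ℝ) :
    ‖u - (r * ‖u‖⁻¹) • u‖ ≤ |‖u‖ - r| := by
  rcases eq_or_ne u 0 with rfl | hu
  · simp
  have hu' : 0 < ‖u‖ := norm_pos_iff.2 hu
  refine le_of_eq ?_
  calc ‖u - (r * ‖u‖⁻¹) • u‖ = ‖(1 - r * ‖u‖⁻¹) • u‖ := by rw [sub_smul, one_smul]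
    _ = |1 - r * ‖u‖⁻¹| * |‖u‖| := by rw [norm_smul, Real.norm_eq_abs, abs_of_pos hu']
    _ = |‖u‖ - r| := by rw [← abs_mul]; congr 1; field_simp

theorem norm_smul_inv_norm_le (u : E) {r : ℝ} (hr : 0 ≤ r) : ‖(r * ‖u‖⁻¹) • u‖ ≤ r := by
  rcases eq_or_ne u 0 with rfl | hu
  · simpa using hr
  · exact (norm_smul_inv_norm' hr hu).le

section Tendsto

variable {ι : Type*} {l : Filter ι}

theorem tendsto_sub_smul_inv_norm {u : ι → E} {r : ℝ} (hu : Tendsto (fun i => ‖u i‖) l (𝓝 r)) :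
    Tendsto (fun i => u i - (r * ‖u i‖⁻¹) • u i) l (𝓝 0) := by
  refine squeeze_zero_norm (fun i => norm_sub_smul_inv_norm_le (u i) r) ?_
  simpa using (hu.sub_const r).abs

theorem tendsto_norm_sub_of_tendsto_zero {F : Type*} [SeminormedAddCommGroup F] {g f : ι → F}
    {c : ℝ} (hg : Tendsto (fun i => ‖g i‖) l (𝓝 c)) (hf : Tendsto f l (𝓝 0)) :
    Tendsto (fun i => ‖g i - f i‖) l (𝓝 c) := by
  have hdiff : Tendsto (fun i => ‖g i - f i‖ - ‖g i‖) l (𝓝 0) := by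
    refine squeeze_zero_norm (fun i => ?_) (tendsto_zero_iff_norm_tendsto_zero.1 hf)
    simpa using abs_norm_sub_norm_le (g i - f i) (g i)
  simpa using hg.add hdiff

theorem tendsto_sub_of_norm_le_of_tendsto_norm_add [UniformConvexSpace E] {u v : ι → E} {r : ℝ}
    (hu : ∀ i, ‖u i‖ ≤ r) (hv : ∀ i, ‖v i‖ ≤ r)
    (huv : Tendsto (fun i => ‖u i + v i‖) l (𝓝 (2 * r))) :
    Tendsto (fun i => u i - v i) l (𝓝 0) := by
  refine tendsto_zero_iff_norm_tendsto_zero.2 <| tendsto_order.2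
    ⟨fun a ha => Eventually.of_forall fun i => ha.trans_le (norm_nonneg _), fun ε hε => ?_⟩
  obtain ⟨δ, hδ, h⟩ := exists_forall_closed_ball_dist_add_le_two_mul_sub E hε r
  filter_upwards [(tendsto_order.1 huv).1 (2 * r - δ) (by linarith)] with i hi
  by_contra! hε_le
  exact (h (hu i) (hv i) hε_le).not_gt hi

theorem tendsto_sub_of_tendsto_norm_of_tendsto_norm_add [UniformConvexSpace E] {u v : ι → E}
    {r : ℝ} (hr : 0 ≤ r) (hu : Tendsto (fun i => ‖u i‖) l (𝓝 r))
    (hv : Tendsto (fun i => ‖v i‖) l (𝓝 r))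
    (huv : Tendsto (fun i => ‖u i + v i‖) l (𝓝 (2 * r))) :
    Tendsto (fun i => u i - v i) l (𝓝 0) := by
  set u' := fun i => (r * ‖u i‖⁻¹) • u i
  set v' := fun i => (r * ‖v i‖⁻¹) • v i
  have hu' : Tendsto (fun i => u i - u' i) l (𝓝 0) := tendsto_sub_smul_inv_norm hu
  have hv' : Tendsto (fun i => v i - v' i) l (𝓝 0) := tendsto_sub_smul_inv_norm hv
  have huv' : Tendsto (fun i => ‖u' i + v' i‖) l (𝓝 (2 * r)) := by
    have := tendsto_norm_sub_of_tendsto_zero huv (by simpa using hu'.add hv')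
    refine this.congr fun i => ?_
    congr 1
    abel
  have hsub := tendsto_sub_of_norm_le_of_tendsto_norm_add
    (fun i => norm_smul_inv_norm_le (u i) hr) (fun i => norm_smul_inv_norm_le (v i) hr) huv'
  have hlim := (hsub.add hu').sub hv'
  rw [add_zero, sub_zero] at hlim
  exact hlim.congr fun i => by simp only [u', v']; abel

end Tendsto

theorem unifConvex_dweak_imp_strong_general
    (huc : ∀ ε > (0:ℝ), ∃ δ > (0:ℝ), ∀ x y : E, ‖x‖ ≤ 1 → ‖y‖ ≤ 1 →
      ε < ‖x - y‖ → ‖x + y‖ / 2 ≤ 1 - δ)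
    (x : ℕ → E) (xhat : E) (hxhat : ‖xhat‖ ≤ 1)
    (hnorm : Tendsto (fun n => ‖x n‖) atTop (𝓝 ‖xhat‖))
    (hweak : ∀ w : E, ‖w‖ ≤ 1 →
      ‖xhat - w‖ - ‖w‖ ≤ atTop.liminf fun n => ‖x n - w‖ - ‖w‖) :
    Tendsto (fun n => ‖x n - xhat‖) atTop (𝓝 0) := by
  have := UniformConvexSpace.of_forall_closedBall huc
  have hliminf : ‖xhat‖ ≤ atTop.liminf fun n => ‖x n + xhat‖ - ‖xhat‖ := by
    have h := hweak (-xhat) (by rwa [norm_neg])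
    rw [sub_neg_eq_add, ← two_smul ℝ, norm_smul, norm_neg, Real.norm_two, two_mul,
      add_sub_cancel_right] at h
    simpa only [sub_neg_eq_add] using h
  have hadd_sub : Tendsto (fun n => ‖x n + xhat‖ - ‖xhat‖) atTop (𝓝 ‖xhat‖) :=
    tendsto_of_le_liminf_of_le_of_tendsto hliminf
      (isBoundedUnder_of ⟨-‖xhat‖, fun n => by simp⟩)
      (Eventually.of_forall fun n => by simpa using norm_add_le (x n) xhat) hnorm
  have hadd : Tendsto (fun n => ‖x n + xhat‖) atTop (𝓝 (2 * ‖xhat‖)) := by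
    simpa [two_mul] using hadd_sub.add_const ‖xhat‖
  exact tendsto_zero_iff_norm_tendsto_zero.1 <|
    tendsto_sub_of_tendsto_norm_of_tendsto_norm_add (norm_nonneg _) hnorm tendsto_const_nhds
      hadd

theorem unifConvex_dweak_imp_strong
    (huc : ∀ ε > (0:ℝ), ∃ δ > (0:ℝ), ∀ x y : E, ‖x‖ ≤ 1 → ‖y‖ ≤ 1 →
      ε < ‖x - y‖ → ‖x + y‖ / 2 ≤ 1 - δ)
    (x : ℕ → E) (hx : ∀ n, ‖x n‖ ≤ 1) (xhat : E) (hxhat : ‖xhat‖ ≤ 1)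
    (hnorm : Tendsto (fun n => ‖x n‖) atTop (𝓝 ‖xhat‖))
    (hweak : ∀ w : E, ‖w‖ ≤ 1 →
      ‖xhat - w‖ - ‖w‖ ≤ atTop.liminf fun n => ‖x n - w‖ - ‖w‖) :
    Tendsto (fun n => ‖x n - xhat‖) atTop (𝓝 0) :=
  unifConvex_dweak_imp_strong_general huc x xhat hxhat hnorm hweak
end

section
/- If (X,d) is a W-convex metric space, then for any sequence (x_n) in X, the set Λ of all d-weak limits of (x_n) is W-convex (closed under z₁, z₂ ∈ Λ ⟹ W(z₁,z₂,s) ∈ Λ for s ∈ [0,1]) and closed in X. -/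
open Filter Topology

variable {X : Type*} [MetricSpace X]

lemma mf_lipschitz (o : X) (h : X → ℝ) (hh : IsMetricFunctional o h) :
    LipschitzWith 1 h := by
  have hcl : IsClosed {f : X → ℝ | ∀ a b : X, dist (f a) (f b) ≤ dist a b} := by
    simp only [Set.setOf_forall]
    refine isClosed_iInter fun a => isClosed_iInter fun b => ?_
    exact isClosed_le ((continuous_apply a).dist (continuous_apply b)) continuous_const
  have hsub : Set.range (internalFunctional o) ⊆
      {f : X → ℝ | ∀ a b : X, dist (f a) (f b) ≤ dist a b} := by
    rintro _ ⟨w, rfl⟩ a b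
    have := abs_dist_sub_le a b w
    simpa [internalFunctional, Real.dist_eq, sub_sub_sub_cancel_right] using this
  have := hcl.closure_subset_iff.mpr hsub hh
  exact LipschitzWith.of_dist_le_mul fun a b => by simpa using this a b

lemma mf_convex (o : X) (W : X → X → ℝ → X)
    (hW : ∀ x y z : X, ∀ t ∈ Set.Icc (0:ℝ) 1,
      dist z (W x y t) ≤ (1 - t) * dist z x + t * dist z y)
    (h : X → ℝ) (hh : IsMetricFunctional o h) {t : ℝ} (ht : t ∈ Set.Icc (0:ℝ) 1) :
    ∀ a b : X, h (W a b t) ≤ (1 - t) * h a + t * h b := by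
  have hcl : IsClosed {f : X → ℝ | ∀ a b : X, f (W a b t) ≤ (1 - t) * f a + t * f b} := by
    simp only [Set.setOf_forall]
    refine isClosed_iInter fun a => isClosed_iInter fun b => ?_
    exact isClosed_le (continuous_apply _)
      (((continuous_apply a).const_smul (1 - t)).add ((continuous_apply b).const_smul t))
  have hsub : Set.range (internalFunctional o) ⊆
      {f : X → ℝ | ∀ a b : X, f (W a b t) ≤ (1 - t) * f a + t * f b} := by
    rintro _ ⟨w, rfl⟩ a b
    have h1 := hW a b w t ht
    simp only [internalFunctional]
    rw [dist_comm a w, dist_comm b w, dist_comm (W a b t) w] at *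
    nlinarith [h1]
  exact hcl.closure_subset_iff.mpr hsub hh

theorem dweak_limits_Wconvex_closed (o : X) (W : X → X → ℝ → X)
    (hW : ∀ x y z : X, ∀ t ∈ Set.Icc (0:ℝ) 1,
      dist z (W x y t) ≤ (1 - t) * dist z x + t * dist z y)
    (x : ℕ → X) :
    (∀ z₁ ∈ {z : X | DWeakConv o x z}, ∀ z₂ ∈ {z : X | DWeakConv o x z},
        ∀ s ∈ Set.Icc (0:ℝ) 1, W z₁ z₂ s ∈ {z : X | DWeakConv o x z}) ∧
    IsClosed {z : X | DWeakConv o x z} := by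
  constructor
  · intro z₁ hz₁ z₂ hz₂ s hs h hh
    have hc := mf_convex o W hW h hh hs z₁ z₂
    have h1 := hz₁ h hh
    have h2 := hz₂ h hh
    obtain ⟨hs0, hs1⟩ := hs
    nlinarith [hc, h1, h2]
  · have : {z : X | DWeakConv o x z} =
        ⋂ h ∈ {h : X → ℝ | IsMetricFunctional o h},
          {z : X | h z ≤ atTop.liminf fun n => h (x n)} := by
      ext z
      simp [DWeakConv, Set.mem_iInter]
    rw [this]
    refine isClosed_biInter fun h hh => ?_
    exact isClosed_le ((mf_lipschitz o h hh).continuous) continuous_const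
end
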